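/- Let P satisfy P(-σ) = e^{-σ}P(σ) on a finite symmetric set S with ⟨tanh(Σ/2)⟩ > 0. The current j_min(σ) = k·tanh(σ/2) for any real k ≠ 0 achieves scaled variance exactly ⟨j_min²⟩/⟨j_min⟩² − 1 = 1/⟨tanh(Σ/2)⟩ − 1. -/

import Mathlib

/-! Pairing each `σ` with `-σ`, the fluctuation relation turns an average `⟨f(Σ)⟩` into
`⟨f(-Σ) e^{-Σ}⟩`. Since `tanh(σ/2) (1 + e^{-σ}) = 1 - e^{-σ}`, applying this to the odd function
`tanh(Σ/2)` and to the even function `tanh²(Σ/2)` gives `⟨tanh²(Σ/2)⟩ = ⟨tanh(Σ/2)⟩`. Hence for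
`j = k tanh(Σ/2)` the ratio `⟨j²⟩ / ⟨j⟩²` is `k² ⟨tanh(Σ/2)⟩ / (k ⟨tanh(Σ/2)⟩)² = 1 / ⟨tanh(Σ/2)⟩`. -/

open Finset Real

lemma Real.tanh_half_mul_one_add_exp_neg (x : ℝ) :
    tanh (x / 2) * (1 + exp (-x)) = 1 - exp (-x) := by
  have hexp : exp (-x) = exp (-(x / 2)) ^ 2 := by rw [← exp_nat_mul]; ring_nf
  have hinv : exp (x / 2) * exp (-(x / 2)) = 1 := by rw [← exp_add, add_neg_cancel, exp_zero]
  have hden : exp (x / 2) + exp (-(x / 2)) ≠ 0 := by positivity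
  rw [tanh_eq, hexp, div_mul_eq_mul_div, div_eq_iff hden]
  linear_combination 2 * exp (-(x / 2)) * hinv

lemma Finset.sum_comp_neg_of_neg_mem {α M : Type*} [InvolutiveNeg α] [AddCommMonoid M]
    {S : Finset α} (hS : ∀ a ∈ S, -a ∈ S) (f : α → M) :
    ∑ a ∈ S, f (-a) = ∑ a ∈ S, f a :=
  sum_nbij' Neg.neg Neg.neg hS hS (fun a _ ↦ neg_neg a) (fun a _ ↦ neg_neg a) fun _ _ ↦ rfl

section DetailedFluctuation

variable {S : Finset ℝ} {P : ℝ → ℝ}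

lemma sum_mul_eq_sum_neg_mul_exp_neg_mul (hSym : ∀ σ ∈ S, -σ ∈ S)
    (hDFT : ∀ σ ∈ S, P (-σ) = exp (-σ) * P σ) (f : ℝ → ℝ) :
    ∑ σ ∈ S, f σ * P σ = ∑ σ ∈ S, f (-σ) * exp (-σ) * P σ := by
  rw [← sum_comp_neg_of_neg_mem hSym]
  refine sum_congr rfl fun σ hσ ↦ ?_
  rw [hDFT σ hσ, mul_assoc]

lemma sum_tanh_half_sq_mul_eq_sum_tanh_half_mul (hSym : ∀ σ ∈ S, -σ ∈ S)
    (hDFT : ∀ σ ∈ S, P (-σ) = exp (-σ) * P σ) :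
    ∑ σ ∈ S, tanh (σ / 2) ^ 2 * P σ = ∑ σ ∈ S, tanh (σ / 2) * P σ := by
  have hodd : ∀ σ : ℝ, tanh (-σ / 2) = -tanh (σ / 2) := fun σ ↦ by rw [neg_div, tanh_neg]
  have hsq := sum_mul_eq_sum_neg_mul_exp_neg_mul hSym hDFT fun σ ↦ tanh (σ / 2) ^ 2
  have hlin := sum_mul_eq_sum_neg_mul_exp_neg_mul hSym hDFT fun σ ↦ tanh (σ / 2)
  simp only [hodd, neg_sq, neg_mul] at hsq hlin
  rw [sum_neg_distrib] at hlin
  have hpair : ∑ σ ∈ S, tanh (σ / 2) ^ 2 * P σ + ∑ σ ∈ S, tanh (σ / 2) ^ 2 * exp (-σ) * P σ =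
      ∑ σ ∈ S, tanh (σ / 2) * P σ - ∑ σ ∈ S, tanh (σ / 2) * exp (-σ) * P σ := by
    rw [← sum_add_distrib, ← sum_sub_distrib]
    refine sum_congr rfl fun σ _ ↦ ?_
    linear_combination tanh (σ / 2) * P σ * tanh_half_mul_one_add_exp_neg σ
  linarith

end DetailedFluctuation

theorem tut_saturation_general (S : Finset ℝ) (hSym : ∀ σ ∈ S, -σ ∈ S)
    (P : ℝ → ℝ)
    (hDFT : ∀ σ ∈ S, P (-σ) = Real.exp (-σ) * P σ)
    (htanh : 0 < ∑ σ ∈ S, Real.tanh (σ / 2) * P σ)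
    (k : ℝ) (hk : k ≠ 0) :
    (∑ σ ∈ S, (k * Real.tanh (σ / 2)) ^ 2 * P σ) /
        (∑ σ ∈ S, (k * Real.tanh (σ / 2)) * P σ) ^ 2 - 1 =
      1 / (∑ σ ∈ S, Real.tanh (σ / 2) * P σ) - 1 := by
  have hsecond :
      ∑ σ ∈ S, (k * tanh (σ / 2)) ^ 2 * P σ = k ^ 2 * ∑ σ ∈ S, tanh (σ / 2) * P σ := by
    rw [← sum_tanh_half_sq_mul_eq_sum_tanh_half_mul hSym hDFT, mul_sum]
    exact sum_congr rfl fun σ _ ↦ by ring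
  have hfirst : ∑ σ ∈ S, k * tanh (σ / 2) * P σ = k * ∑ σ ∈ S, tanh (σ / 2) * P σ := by
    rw [mul_sum]
    exact sum_congr rfl fun σ _ ↦ by ring
  rw [hsecond, hfirst]
  field_simp [htanh.ne']

theorem tut_saturation (S : Finset ℝ) (hSym : ∀ σ ∈ S, -σ ∈ S)
    (P : ℝ → ℝ) (hP : ∀ σ ∈ S, 0 ≤ P σ) (hsum : ∑ σ ∈ S, P σ = 1)
    (hDFT : ∀ σ ∈ S, P (-σ) = Real.exp (-σ) * P σ)
    (htanh : 0 < ∑ σ ∈ S, Real.tanh (σ / 2) * P σ)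
    (k : ℝ) (hk : k ≠ 0) :
    (∑ σ ∈ S, (k * Real.tanh (σ / 2)) ^ 2 * P σ) /
        (∑ σ ∈ S, (k * Real.tanh (σ / 2)) * P σ) ^ 2 - 1 =
      1 / (∑ σ ∈ S, Real.tanh (σ / 2) * P σ) - 1 :=
  tut_saturation_general S hSym P hDFT htanh k hk
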